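/- A quadratic module M ⊆ Sym ℝ[X₁,…,Xₙ]^{t×t} is archimedean if and only if there exists N ∈ ℕ such that (N − ∑ᵢ Xᵢ²)·I ∈ M. -/

import Mathlib

/-! The matrices `a` with `N - aᵀa ∈ M` for some `N ∈ ℕ` form a subring of the matrix ring:
sums are handled by the parallelogram identity `(a+b)ᵀ(a+b) + (a-b)ᵀ(a-b) = 2aᵀa + 2bᵀb`, products
by `NK - (ab)ᵀ(ab) = N(K - bᵀb) + bᵀ(N - aᵀa)b`. This subring contains the matrix units and the real
scalars, and, once `(N - ∑ Xⱼ²)·I ∈ M`, also every `Xᵢ·I` because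
`N - Xᵢ² = (N - ∑ Xⱼ²) + ∑_{j ≠ i} Xⱼ²`; these generate all matrix polynomials. Conversely, adding
up the bounds for the matrices `Xᵢ·I` gives `(N - ∑ Xᵢ²)·I ∈ M`. -/

open Matrix MvPolynomial

structure IsQuadraticModule {ι R : Type*} [Fintype ι] [DecidableEq ι] [CommRing R]
    (M : Set (Matrix ι ι R)) : Prop where
  one_mem : 1 ∈ M
  add_mem : ∀ m ∈ M, ∀ m' ∈ M, m + m' ∈ M
  conj_mem : ∀ m ∈ M, ∀ p : Matrix ι ι R, pᵀ * m * p ∈ M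

namespace IsQuadraticModule

variable {ι R : Type*} [Fintype ι] [DecidableEq ι] [CommRing R] {M : Set (Matrix ι ι R)}

theorem transpose_mul_self_mem (hM : IsQuadraticModule M) (p : Matrix ι ι R) : pᵀ * p ∈ M := by
  simpa using hM.conj_mem 1 hM.one_mem p

theorem zero_mem (hM : IsQuadraticModule M) : (0 : Matrix ι ι R) ∈ M := by
  simpa using hM.transpose_mul_self_mem 0

theorem sum_mem (hM : IsQuadraticModule M) {κ : Type*} (s : Finset κ) {m : κ → Matrix ι ι R}
    (hm : ∀ k ∈ s, m k ∈ M) : ∑ k ∈ s, m k ∈ M := by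
  classical
  induction s using Finset.induction_on with
  | empty => simpa using hM.zero_mem
  | insert k s hk ih =>
    rw [Finset.sum_insert hk]
    exact hM.add_mem _ (hm k (s.mem_insert_self k)) _
      (ih fun l hl => hm l (s.mem_insert_of_mem hl))

theorem nsmul_mem (hM : IsQuadraticModule M) (N : ℕ) {m : Matrix ι ι R} (hm : m ∈ M) :
    N • m ∈ M := by
  simpa using hM.sum_mem (Finset.range N) fun _ _ => hm

theorem scalar_sq_mem (hM : IsQuadraticModule M) (f : R) : scalar ι (f ^ 2) ∈ M := by
  simpa [pow_two, diagonal_transpose] using hM.transpose_mul_self_mem (scalar ι f)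

theorem scalar_algebraMap_mem (hM : IsQuadraticModule M) [Algebra ℝ R] {c : ℝ} (hc : 0 ≤ c) :
    scalar ι (algebraMap ℝ R c) ∈ M := by
  simpa [← map_pow, Real.sq_sqrt hc] using hM.scalar_sq_mem (algebraMap ℝ R √c)

def boundedSubring (hM : IsQuadraticModule M) : Subring (Matrix ι ι R) where
  carrier := {a | ∃ N : ℕ, (N : Matrix ι ι R) - aᵀ * a ∈ M}
  zero_mem' := ⟨0, by simpa using hM.zero_mem⟩
  one_mem' := ⟨1, by simpa using hM.zero_mem⟩
  neg_mem' := by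
    rintro a ⟨N, hN⟩
    exact ⟨N, by simpa using hN⟩
  add_mem' := by
    rintro a b ⟨N, hN⟩ ⟨K, hK⟩
    refine ⟨2 * N + 2 * K, ?_⟩
    have key : ((2 * N + 2 * K : ℕ) : Matrix ι ι R) - (a + b)ᵀ * (a + b) =
        2 • ((N : Matrix ι ι R) - aᵀ * a) + 2 • ((K : Matrix ι ι R) - bᵀ * b) +
          (a - b)ᵀ * (a - b) := by
      simp only [transpose_add, transpose_sub]
      push_cast
      noncomm_ring
    rw [key]
    exact hM.add_mem _ (hM.add_mem _ (hM.nsmul_mem 2 hN) _ (hM.nsmul_mem 2 hK)) _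
      (hM.transpose_mul_self_mem _)
  mul_mem' := by
    rintro a b ⟨N, hN⟩ ⟨K, hK⟩
    refine ⟨N * K, ?_⟩
    have key : ((N * K : ℕ) : Matrix ι ι R) - (a * b)ᵀ * (a * b) =
        N • ((K : Matrix ι ι R) - bᵀ * b) + bᵀ * ((N : Matrix ι ι R) - aᵀ * a) * b := by
      rw [transpose_mul, mul_sub, sub_mul, ← nsmul_eq_mul', smul_mul_assoc, smul_sub,
        Nat.cast_mul, ← nsmul_eq_mul]
      simp only [Matrix.mul_assoc]
      abel
    rw [key]
    exact hM.add_mem _ (hM.nsmul_mem N hK) _ (hM.conj_mem _ hN b)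

theorem boundedSubring_eq_top_iff (hM : IsQuadraticModule M) :
    hM.boundedSubring = ⊤ ↔ ∀ a : Matrix ι ι R, ∃ N : ℕ, (N : Matrix ι ι R) - aᵀ * a ∈ M :=
  Subring.eq_top_iff' _

theorem scalar_mem_boundedSubring_iff (hM : IsQuadraticModule M) {f : R} :
    scalar ι f ∈ hM.boundedSubring ↔ ∃ N : ℕ, scalar ι ((N : R) - f ^ 2) ∈ M := by
  have hf : ∀ N : ℕ,
      (N : Matrix ι ι R) - (scalar ι f)ᵀ * scalar ι f = scalar ι ((N : R) - f ^ 2) := by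
    intro N
    rw [map_sub, map_natCast, map_pow, sq, scalar_apply, diagonal_transpose]
  simp only [← hf]
  rfl

theorem single_one_mem_boundedSubring (hM : IsQuadraticModule M) (i j : ι) :
    single i j (1 : R) ∈ hM.boundedSubring := by
  refine ⟨1, ?_⟩
  -- `1 - single j j 1` is a symmetric idempotent, hence of the form `qᵀ * q`.
  have hq : (1 - single j j (1 : R))ᵀ * (1 - single j j 1) = 1 - single j j 1 := by
    simp [sub_mul, mul_sub, single_mul_single_same]
  have hmem := hM.transpose_mul_self_mem (1 - single j j 1)
  rw [hq] at hmem
  simpa [single_mul_single_same] using hmem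

theorem scalar_algebraMap_mem_boundedSubring (hM : IsQuadraticModule M) [Algebra ℝ R]
    (c : ℝ) :
    scalar ι (algebraMap ℝ R c) ∈ hM.boundedSubring := by
  refine hM.scalar_mem_boundedSubring_iff.2 ⟨⌈c ^ 2⌉₊, ?_⟩
  have hc : (0 : ℝ) ≤ ⌈c ^ 2⌉₊ - c ^ 2 := sub_nonneg.2 (Nat.le_ceil _)
  simpa using hM.scalar_algebraMap_mem hc

theorem scalar_mem_boundedSubring_of_sum_sq (hM : IsQuadraticModule M) {κ : Type*}
    {s : Finset κ} {x : κ → R} {N : ℕ} (hN : scalar ι ((N : R) - ∑ k ∈ s, x k ^ 2) ∈ M)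
    {k : κ} (hk : k ∈ s) : scalar ι (x k) ∈ hM.boundedSubring := by
  classical
  refine hM.scalar_mem_boundedSubring_iff.2 ⟨N, ?_⟩
  have hsplit :
      (N : R) - x k ^ 2 = ((N : R) - ∑ l ∈ s, x l ^ 2) + ∑ l ∈ s.erase k, x l ^ 2 := by
    rw [← Finset.add_sum_erase s _ hk]
    ring
  rw [hsplit, map_add, map_sum]
  exact hM.add_mem _ hN _ (hM.sum_mem _ fun l _ => hM.scalar_sq_mem (x l))

theorem boundedSubring_eq_top_of_forall_scalar_mem (hM : IsQuadraticModule M)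
    (h : ∀ f : R, scalar ι f ∈ hM.boundedSubring) : hM.boundedSubring = ⊤ := by
  refine eq_top_iff.2 fun a _ => ?_
  rw [matrix_eq_sum_single a]
  refine Subring.sum_mem _ fun i _ => Subring.sum_mem _ fun j _ => ?_
  have hij : single i j (a i j) = scalar ι (a i j) * single i j 1 := by
    rw [scalar_apply, ← smul_eq_diagonal_mul, smul_single, smul_eq_mul, mul_one]
  rw [hij]
  exact Subring.mul_mem _ (h _) (hM.single_one_mem_boundedSubring i j)

theorem exists_scalar_natCast_sub_sum_sq_mem (hM : IsQuadraticModule M)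
    (h : hM.boundedSubring = ⊤) {κ : Type*} (s : Finset κ) (x : κ → R) :
    ∃ N : ℕ, scalar ι ((N : R) - ∑ k ∈ s, x k ^ 2) ∈ M := by
  have hx : ∀ k, ∃ N : ℕ, scalar ι ((N : R) - x k ^ 2) ∈ M := fun k =>
    hM.scalar_mem_boundedSubring_iff.1 (h ▸ Subring.mem_top _)
  choose N hN using hx
  refine ⟨∑ k ∈ s, N k, ?_⟩
  rw [Nat.cast_sum, ← Finset.sum_sub_distrib, map_sum]
  exact hM.sum_mem s fun k _ => hN k

theorem boundedSubring_eq_top_of_sum_sq {σ : Type*} [Fintype σ]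
    {M : Set (Matrix ι ι (MvPolynomial σ ℝ))} (hM : IsQuadraticModule M) {N : ℕ}
    (hN : scalar ι ((N : MvPolynomial σ ℝ) - ∑ i, X i ^ 2) ∈ M) : hM.boundedSubring = ⊤ := by
  refine hM.boundedSubring_eq_top_of_forall_scalar_mem fun f => ?_
  induction f using MvPolynomial.induction_on with
  | C c => exact hM.scalar_algebraMap_mem_boundedSubring c
  | add f g hf hg => simpa only [map_add] using Subring.add_mem _ hf hg
  | mul_X f i hf =>
    simpa only [map_mul] using
      Subring.mul_mem _ hf (hM.scalar_mem_boundedSubring_of_sum_sq hN (Finset.mem_univ i))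

end IsQuadraticModule

theorem stmt9_general (n t : ℕ)
    (M : Set (Matrix (Fin t) (Fin t) (MvPolynomial (Fin n) ℝ)))
    (h1 : (1 : Matrix (Fin t) (Fin t) (MvPolynomial (Fin n) ℝ)) ∈ M)
    (hadd : ∀ m ∈ M, ∀ m' ∈ M, m + m' ∈ M)
    (hconj : ∀ m ∈ M, ∀ p : Matrix (Fin t) (Fin t) (MvPolynomial (Fin n) ℝ),
      pᵀ * m * p ∈ M) :
    (∀ a : Matrix (Fin t) (Fin t) (MvPolynomial (Fin n) ℝ),
        ∃ N : ℕ, (N : Matrix (Fin t) (Fin t) (MvPolynomial (Fin n) ℝ)) - aᵀ * a ∈ M) ↔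
      ∃ N : ℕ,
        (((N : MvPolynomial (Fin n) ℝ) - ∑ i, X i ^ 2) •
          (1 : Matrix (Fin t) (Fin t) (MvPolynomial (Fin n) ℝ))) ∈ M := by
  have hM : IsQuadraticModule M := ⟨h1, hadd, hconj⟩
  simp only [smul_one_eq_diagonal, ← scalar_apply, ← hM.boundedSubring_eq_top_iff]
  exact ⟨fun h => hM.exists_scalar_natCast_sub_sum_sq_mem h _ _,
    fun ⟨_, hN⟩ => hM.boundedSubring_eq_top_of_sum_sq hN⟩

/-- **Lemma 7.** A quadratic module `M` of symmetric matrix polynomials is archimedean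
(every `a` satisfies `N·I − aᵀa ∈ M` for some `N ∈ ℕ`) if and only if
`(N − ∑ᵢ Xᵢ²)·I ∈ M` for some `N ∈ ℕ`. -/
theorem stmt9 (n t : ℕ)
    (M : Set (Matrix (Fin t) (Fin t) (MvPolynomial (Fin n) ℝ)))
    (hsym : ∀ m ∈ M, mᵀ = m)
    (h1 : (1 : Matrix (Fin t) (Fin t) (MvPolynomial (Fin n) ℝ)) ∈ M)
    (hadd : ∀ m ∈ M, ∀ m' ∈ M, m + m' ∈ M)
    (hconj : ∀ m ∈ M, ∀ p : Matrix (Fin t) (Fin t) (MvPolynomial (Fin n) ℝ),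
      pᵀ * m * p ∈ M) :
    (∀ a : Matrix (Fin t) (Fin t) (MvPolynomial (Fin n) ℝ),
        ∃ N : ℕ, (N : Matrix (Fin t) (Fin t) (MvPolynomial (Fin n) ℝ)) - aᵀ * a ∈ M) ↔
      ∃ N : ℕ,
        (((N : MvPolynomial (Fin n) ℝ) - ∑ i, X i ^ 2) •
          (1 : Matrix (Fin t) (Fin t) (MvPolynomial (Fin n) ℝ))) ∈ M :=
  stmt9_general n t M h1 hadd hconj
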